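/- For a maximised context tree of maximal depth D over an m-ary alphabet, where each node s at depth d < D has maximised probability P_m^s = max{γ·P_e(a_s), (1-γ)·∏_{j=0}^{m-1} P_m^{js}} and each node at depth D has P_m^s = P_e(a_s), the root maximised probability satisfies P_m^λ = max_{S ∈ C_D} π_D(S) ∏_{s∈S} P_e(a_s), with π_D(S) = (1-γ)^{(|S|-1)/(m-1)} · γ^{|S| - L_D(S)}. -/

import Mathlib

/-!
A context set of depth `d + 1` is either the root alone or is grafted from `m` context sets of
depth `d`, one below each child of the root. Since every complete proper set satisfies
`|S| - 1 = (m - 1) · #(internal nodes)`, the prior factorises along grafting: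
`π_{d+1}(graft T) = (1 - γ) ∏ⱼ π_d(T j)`, while `π_{d+1}({λ}) = γ`. Hence the maximum over
grafted sets splits into independent maxima over the children, and induction on the depth
turns the maximisation into the recursion defining `P_m`.
-/

open Finset

/-- All strings of length exactly `k` over the alphabet `Fin m`. -/
def listsLen (m : ℕ) : ℕ → Finset (List (Fin m))
  | 0 => {[]}
  | k + 1 => ((Finset.univ : Finset (Fin m)) ×ˢ listsLen m k).image (fun p => p.1 :: p.2)

/-- All strings of length at most `D` over the alphabet `Fin m`. -/
def listsUpTo (m D : ℕ) : Finset (List (Fin m)) :=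
  (Finset.range (D + 1)).biUnion (fun k => listsLen m k)

/-- `C_D`: all complete and proper context sets (models) of depth at most `D`. -/
def contextSets (m D : ℕ) : Finset (Finset (List (Fin m))) :=
  (listsUpTo m D).powerset.filter
    (fun S => (∀ s ∈ S, ∀ t ∈ S, s <:+ t → s = t) ∧
      ∀ l ∈ listsLen m D, ∃ s ∈ S, s <:+ l)

/-- The prior `π_D(S) = (1-γ)^((|S|-1)/(m-1)) γ^(|S| - L_D(S))` on models. -/
noncomputable def modelPrior (m : ℕ) (γ : ℝ) (D : ℕ) (S : Finset (List (Fin m))) : ℝ :=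
  (1 - γ) ^ ((S.card - 1) / (m - 1)) * γ ^ (S.card - (S.filter (fun s => s.length = D)).card)

/-- The maximised probability `P_m^s` of a node `s` with remaining depth `d`:
at remaining depth `0` (i.e. at maximal depth `D`) it is `P_e(a_s)`, and
otherwise `max { γ P_e(a_s), (1-γ) ∏_j P_m^{js} }`. -/
noncomputable def Pmax (m : ℕ) (γ : ℝ) (Pe : List (Fin m) → ℝ) : ℕ → List (Fin m) → ℝ
  | 0, s => Pe s
  | d + 1, s => max (γ * Pe s) ((1 - γ) * ∏ j : Fin m, Pmax m γ Pe d (j :: s))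

lemma mem_listsLen {m k : ℕ} {l : List (Fin m)} : l ∈ listsLen m k ↔ l.length = k := by
  induction k generalizing l with
  | zero => simp [listsLen, List.length_eq_zero_iff]
  | succ k ih =>
    cases l with
    | nil => simp [listsLen]
    | cons a t => simp [listsLen, ih]

lemma mem_listsUpTo {m D : ℕ} {l : List (Fin m)} : l ∈ listsUpTo m D ↔ l.length ≤ D := by
  simp [listsUpTo, mem_listsLen]

lemma mem_contextSets {m D : ℕ} {S : Finset (List (Fin m))} :
    S ∈ contextSets m D ↔ (∀ s ∈ S, s.length ≤ D) ∧
      (∀ s ∈ S, ∀ t ∈ S, s <:+ t → s = t) ∧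
      ∀ l ∈ listsLen m D, ∃ s ∈ S, s <:+ l := by
  simp only [contextSets, mem_filter, mem_powerset, subset_iff, mem_listsUpTo]

lemma append_singleton_suffix_append_singleton {α : Type*} {a b : List α} {i j : α} :
    a ++ [i] <:+ b ++ [j] ↔ i = j ∧ a <:+ b := by
  constructor
  · rintro ⟨u, hu⟩
    rw [← List.append_assoc] at hu
    obtain ⟨hab, hij⟩ := List.append_inj' hu rfl
    exact ⟨by simpa using hij, u, hab⟩
  · rintro ⟨rfl, u, rfl⟩
    exact ⟨u, by rw [List.append_assoc]⟩

lemma nonempty_of_mem_contextSets {m D : ℕ} (hm : 1 ≤ m) {S : Finset (List (Fin m))}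
    (hS : S ∈ contextSets m D) : S.Nonempty := by
  obtain ⟨s, hs, -⟩ :=
    (mem_contextSets.mp hS).2.2 (List.replicate D ⟨0, hm⟩) (by simp [mem_listsLen])
  exact ⟨s, hs⟩

lemma singleton_nil_mem_contextSets (m D : ℕ) :
    ({[]} : Finset (List (Fin m))) ∈ contextSets m D :=
  mem_contextSets.mpr ⟨by simp, by simp, fun _ _ => ⟨[], by simp, List.nil_suffix⟩⟩

lemma eq_singleton_nil_of_nil_mem {m D : ℕ} {S : Finset (List (Fin m))}
    (hS : S ∈ contextSets m D) (h : [] ∈ S) : S = {[]} :=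
  eq_singleton_iff_unique_mem.mpr
    ⟨h, fun t ht => ((mem_contextSets.mp hS).2.1 [] h t ht List.nil_suffix).symm⟩

lemma mem_contextSets_zero {m : ℕ} {S : Finset (List (Fin m))} :
    S ∈ contextSets m 0 ↔ S = {[]} := by
  refine ⟨fun hS => eq_singleton_nil_of_nil_mem hS ?_,
    fun h => h ▸ singleton_nil_mem_contextSets m 0⟩
  obtain ⟨hlen, -, hcomplete⟩ := mem_contextSets.mp hS
  obtain ⟨s, hs, -⟩ := hcomplete [] (by simp [mem_listsLen])
  rwa [← List.length_eq_zero_iff.mp (Nat.le_zero.mp (hlen s hs))]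

lemma graft_injective (m : ℕ) :
    Function.Injective (fun p : (_ : Fin m) × List (Fin m) => p.2 ++ [p.1]) := by
  rintro ⟨i, a⟩ ⟨j, b⟩ h
  obtain ⟨rfl, hij⟩ := List.append_inj' h rfl
  simp_all

/-- The context set whose subtree below the child `j` of the root is `T j`. Contexts are read
backwards in time, so the symbol nearest the root is the last one of the list. -/
def graft {m : ℕ} (T : Fin m → Finset (List (Fin m))) : Finset (List (Fin m)) :=
  (univ.sigma T).map ⟨_, graft_injective m⟩

def branch {m : ℕ} (d : ℕ) (S : Finset (List (Fin m))) (j : Fin m) : Finset (List (Fin m)) :=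
  (listsUpTo m d).filter (fun t => t ++ [j] ∈ S)

section graft

variable {m : ℕ} (T : Fin m → Finset (List (Fin m)))

lemma mem_graft {x : List (Fin m)} : x ∈ graft T ↔ ∃ j, ∃ t ∈ T j, t ++ [j] = x := by
  simp [graft]

lemma card_graft : (graft T).card = ∑ j, (T j).card := by
  simp [graft]

lemma prod_graft {M : Type*} [CommMonoid M] (f : List (Fin m) → M) :
    ∏ x ∈ graft T, f x = ∏ j, ∏ t ∈ T j, f (t ++ [j]) := by
  rw [graft, prod_map, prod_sigma]
  rfl

lemma filter_length_graft (d : ℕ) :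
    (graft T).filter (fun s => s.length = d + 1) =
      graft (fun j => (T j).filter (·.length = d)) := by
  ext x
  simp only [mem_filter, mem_graft]
  aesop

end graft

lemma graft_mem_contextSets {m d : ℕ} {T : Fin m → Finset (List (Fin m))}
    (hT : ∀ j, T j ∈ contextSets m d) : graft T ∈ contextSets m (d + 1) := by
  refine mem_contextSets.mpr ⟨?_, ?_, fun l hl => ?_⟩
  · rintro _ hs
    obtain ⟨j, t, ht, rfl⟩ := (mem_graft T).mp hs
    simpa using (mem_contextSets.mp (hT j)).1 t ht
  · rintro _ hs _ ht hst
    obtain ⟨i, a, ha, rfl⟩ := (mem_graft T).mp hs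
    obtain ⟨j, b, hb, rfl⟩ := (mem_graft T).mp ht
    obtain ⟨rfl, hab⟩ := append_singleton_suffix_append_singleton.mp hst
    rw [(mem_contextSets.mp (hT i)).2.1 a ha b hb hab]
  · have hne : l ≠ [] := by rintro rfl; simp [mem_listsLen] at hl
    obtain ⟨t, ht, htl⟩ := (mem_contextSets.mp (hT (l.getLast hne))).2.2 l.dropLast
      (by simp only [mem_listsLen, List.length_dropLast] at hl ⊢; omega)
    refine ⟨t ++ [l.getLast hne], (mem_graft T).mpr ⟨_, t, ht, rfl⟩, ?_⟩
    have := (append_singleton_suffix_append_singleton (i := l.getLast hne)).mpr ⟨rfl, htl⟩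
    rwa [List.dropLast_append_getLast hne] at this

section branch

variable {m d : ℕ} {S : Finset (List (Fin m))}

lemma graft_branch (hS : S ∈ contextSets m (d + 1)) (h : [] ∉ S) : graft (branch d S) = S := by
  ext x
  simp only [mem_graft, branch, mem_filter, mem_listsUpTo]
  constructor
  · rintro ⟨j, t, ⟨-, ht⟩, rfl⟩
    exact ht
  · intro hx
    have hne : x ≠ [] := by rintro rfl; exact h hx
    refine ⟨x.getLast hne, x.dropLast, ⟨?_, ?_⟩, List.dropLast_append_getLast hne⟩
    · simpa using (mem_contextSets.mp hS).1 x hx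
    · rwa [List.dropLast_append_getLast hne]

lemma branch_mem_contextSets (hS : S ∈ contextSets m (d + 1)) (h : [] ∉ S) (j : Fin m) :
    branch d S j ∈ contextSets m d := by
  obtain ⟨-, hproper, hcomplete⟩ := mem_contextSets.mp hS
  refine mem_contextSets.mpr
    ⟨fun s hs => mem_listsUpTo.mp (mem_filter.mp hs).1, ?_, fun l hl => ?_⟩
  · intro s hs t ht hst
    exact List.append_cancel_right (hproper _ (mem_filter.mp hs).2 _ (mem_filter.mp ht).2
      (append_singleton_suffix_append_singleton.mpr ⟨rfl, hst⟩))
  · obtain ⟨s, hs, hsl⟩ := hcomplete (l ++ [j]) (by simpa [mem_listsLen] using hl)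
    have hne : s ≠ [] := by rintro rfl; exact h hs
    rw [← List.dropLast_append_getLast hne] at hs hsl
    obtain ⟨rfl, hsuffix⟩ := append_singleton_suffix_append_singleton.mp hsl
    exact ⟨s.dropLast, mem_filter.mpr ⟨mem_listsUpTo.mpr
      (hsuffix.length_le.trans_eq (mem_listsLen.mp hl)), hs⟩, hsuffix⟩

end branch

lemma mem_contextSets_succ {m d : ℕ} {S : Finset (List (Fin m))} :
    S ∈ contextSets m (d + 1) ↔
      S = {[]} ∨ ∃ T : Fin m → Finset (List (Fin m)),
        (∀ j, T j ∈ contextSets m d) ∧ S = graft T := by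
  constructor
  · intro hS
    by_cases h : [] ∈ S
    · exact .inl (eq_singleton_nil_of_nil_mem hS h)
    · exact .inr ⟨branch d S, branch_mem_contextSets hS h, (graft_branch hS h).symm⟩
  · rintro (rfl | ⟨T, hT, rfl⟩)
    · exact singleton_nil_mem_contextSets m (d + 1)
    · exact graft_mem_contextSets hT

lemma sum_sub_one_eq {m : ℕ} (hm : 1 ≤ m) {n : Fin m → ℕ} (hn : ∀ j, 1 ≤ n j) :
    ∑ j, n j - 1 = ∑ j, (n j - 1) + (m - 1) := by
  have : ∑ j, n j = ∑ j, (n j - 1) + m := by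
    rw [← Fintype.sum_congr _ _ (fun j => Nat.sub_add_cancel (hn j)), sum_add_distrib]
    simp
  omega

lemma sub_one_dvd_card_sub_one {m : ℕ} (hm : 1 ≤ m) {d : ℕ} {S : Finset (List (Fin m))}
    (hS : S ∈ contextSets m d) : m - 1 ∣ S.card - 1 := by
  induction d generalizing S with
  | zero => simp [mem_contextSets_zero.mp hS]
  | succ d ih =>
    obtain rfl | ⟨T, hT, rfl⟩ := mem_contextSets_succ.mp hS
    · simp
    · rw [card_graft, sum_sub_one_eq hm fun j => (nonempty_of_mem_contextSets hm (hT j)).card_pos]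
      exact dvd_add (dvd_sum fun j _ => ih (hT j)) dvd_rfl

lemma modelPrior_nonneg {m : ℕ} {γ : ℝ} (hγ₀ : 0 ≤ γ) (hγ₁ : γ ≤ 1) (d : ℕ)
    (S : Finset (List (Fin m))) : 0 ≤ modelPrior m γ d S := by
  have : 0 ≤ 1 - γ := sub_nonneg.mpr hγ₁
  unfold modelPrior
  positivity

lemma modelPrior_zero_singleton_nil (m : ℕ) (γ : ℝ) :
    modelPrior m γ 0 ({[]} : Finset (List (Fin m))) = 1 := by
  simp [modelPrior, filter_singleton]

lemma modelPrior_succ_singleton_nil (m : ℕ) (γ : ℝ) (d : ℕ) :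
    modelPrior m γ (d + 1) ({[]} : Finset (List (Fin m))) = γ := by
  simp [modelPrior, filter_singleton]

lemma modelPrior_graft {m d : ℕ} (hm : 2 ≤ m) (γ : ℝ) {T : Fin m → Finset (List (Fin m))}
    (hT : ∀ j, T j ∈ contextSets m d) :
    modelPrior m γ (d + 1) (graft T) = (1 - γ) * ∏ j, modelPrior m γ d (T j) := by
  have hcard : ∀ j, 1 ≤ (T j).card :=
    fun j => (nonempty_of_mem_contextSets (by omega) (hT j)).card_pos
  have hinternal : (∑ j, (T j).card - 1) / (m - 1) = ∑ j, ((T j).card - 1) / (m - 1) + 1 := by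
    rw [sum_sub_one_eq (by omega) hcard, Nat.add_div_right _ (by omega),
      Nat.sum_div fun j _ => sub_one_dvd_card_sub_one (by omega) (hT j)]
  unfold modelPrior
  rw [filter_length_graft, card_graft, card_graft, hinternal,
    ← sum_tsub_distrib _ fun j _ => card_filter_le _ _, pow_succ, prod_mul_distrib,
    prod_pow_eq_pow_sum, prod_pow_eq_pow_sum]
  ring

lemma modelPrior_graft_mul_prod {m d : ℕ} (hm : 2 ≤ m) (γ : ℝ)
    {T : Fin m → Finset (List (Fin m))} (hT : ∀ j, T j ∈ contextSets m d)
    (Pe : List (Fin m) → ℝ) (s : List (Fin m)) :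
    modelPrior m γ (d + 1) (graft T) * ∏ t ∈ graft T, Pe (t ++ s) =
      (1 - γ) * ∏ j, (modelPrior m γ d (T j) * ∏ t ∈ T j, Pe (t ++ j :: s)) := by
  simp [modelPrior_graft hm γ hT, prod_graft, mul_assoc, prod_mul_distrib]

theorem isGreatest_Pmax {m : ℕ} (hm : 2 ≤ m) {γ : ℝ} (hγ₀ : 0 ≤ γ) (hγ₁ : γ ≤ 1)
    {Pe : List (Fin m) → ℝ} (hPe : ∀ s, 0 ≤ Pe s) (d : ℕ) (s : List (Fin m)) :
    IsGreatest {x | ∃ S ∈ contextSets m d, x = modelPrior m γ d S * ∏ t ∈ S, Pe (t ++ s)}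
      (Pmax m γ Pe d s) := by
  induction d generalizing s with
  | zero =>
    simp [mem_contextSets_zero, modelPrior_zero_singleton_nil, Pmax, IsGreatest, upperBounds]
  | succ d ih =>
    constructor
    · rcases max_choice (γ * Pe s) ((1 - γ) * ∏ j, Pmax m γ Pe d (j :: s)) with h | h
      · exact ⟨{[]}, singleton_nil_mem_contextSets m (d + 1),
          by simp [Pmax, h, modelPrior_succ_singleton_nil]⟩
      · choose T hT hPmax using fun j => (ih (j :: s)).1
        refine ⟨graft T, graft_mem_contextSets hT, ?_⟩
        rw [modelPrior_graft_mul_prod hm γ hT, Pmax, h]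
        simp only [hPmax]
    · rintro _ ⟨S, hS, rfl⟩
      obtain rfl | ⟨T, hT, rfl⟩ := mem_contextSets_succ.mp hS
      · simp [Pmax, modelPrior_succ_singleton_nil]
      · rw [modelPrior_graft_mul_prod hm γ hT, Pmax]
        refine le_max_of_le_right (mul_le_mul_of_nonneg_left ?_ (sub_nonneg.mpr hγ₁))
        refine prod_le_prod (fun j _ => ?_) (fun j _ => (ih (j :: s)).2 ⟨T j, hT j, rfl⟩)
        exact mul_nonneg (modelPrior_nonneg hγ₀ hγ₁ _ _) (prod_nonneg fun t _ => hPe _)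

/-- the root maximised probability is the maximum, over all
complete proper context sets `S ∈ C_D`, of `π_D(S) ∏_{s∈S} P_e(a_s)`. -/
theorem ctm_root_maximised_probability (m D : ℕ) (hm : 2 ≤ m) (γ : ℝ)
    (hγ : γ ∈ Set.Ioo (0:ℝ) 1) (Pe : List (Fin m) → ℝ) (hPe : ∀ s, 0 < Pe s) :
    IsGreatest {x : ℝ | ∃ S ∈ contextSets m D, x = modelPrior m γ D S * ∏ s ∈ S, Pe s}
      (Pmax m γ Pe D []) := by
  simpa using isGreatest_Pmax hm hγ.1.le hγ.2.le (fun s => (hPe s).le) D []
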